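/- arXiv:2008.01704 — 4 statements merged into one kernel-verified Lean document; each statement's English description precedes it below -/
import Mathlib

section
/- The truncated α-geometric mechanism is (-ln α)-differentially private: for query values k, k' ∈ {0,...,n} with |k - k'| ≤ 1, and every output r ∈ {0,...,n}, the output probability on input k is at most (1/α) times the output probability on input k'. -/
lemma aux_pow_le (α : ℝ) (h0 : 0 < α) (h1 : α ≤ 1) {a b : ℕ} (hab : b ≤ a + 1) :
    α ^ a ≤ (1 / α) * α ^ b := by
  rw [one_div, ← div_eq_inv_mul, le_div_iff₀ h0, ← pow_succ]
  exact pow_le_pow_of_le_one h0.le h1 hab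

theorem truncated_geometric_mechanism_dp (α : ℝ) (h0 : 0 < α) (h1 : α < 1)
    (n : ℕ) (hn : 1 ≤ n)
    (P : ℕ → ℕ → ℝ)
    (hP : ∀ k r, P k r =
      if r = 0 then α ^ k / (1 + α)
      else if r = n then α ^ (n - k) / (1 + α)
      else ((1 - α) / (1 + α)) * α ^ ((r : ℤ) - (k : ℤ)).natAbs)
    (k k' : ℕ) (hk : k ≤ n) (hk' : k' ≤ n)
    (hneighbor : |(k : ℤ) - (k' : ℤ)| ≤ 1)
    (r : ℕ) (hr : r ≤ n) :
    P k r ≤ (1 / α) * P k' r := by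
  rw [abs_le] at hneighbor
  obtain ⟨hl, hrr⟩ := hneighbor
  have hpos : (0 : ℝ) < 1 + α := by linarith
  rw [hP, hP]
  by_cases hr0 : r = 0
  · simp only [hr0, if_true]
    have h := aux_pow_le α h0 h1.le (a := k) (b := k') (by omega)
    rw [show (1/α) * (α^k'/(1+α)) = (1/α * α^k')/(1+α) by ring]
    exact div_le_div_of_nonneg_right h hpos.le
  · simp only [hr0, if_false]
    by_cases hrn : r = n
    · simp only [hrn, if_true]
      have h := aux_pow_le α h0 h1.le (a := n - k) (b := n - k') (by omega)
      rw [show (1/α) * (α^(n-k')/(1+α)) = (1/α * α^(n-k'))/(1+α) by ring]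
      exact div_le_div_of_nonneg_right h hpos.le
    · simp only [hrn, if_false]
      have h := aux_pow_le α h0 h1.le (a := ((r : ℤ) - k).natAbs)
        (b := ((r : ℤ) - k').natAbs) (by omega)
      have hc : (0 : ℝ) ≤ (1 - α) / (1 + α) := div_nonneg (by linarith) hpos.le
      calc ((1 - α) / (1 + α)) * α ^ ((r : ℤ) - k).natAbs
          ≤ ((1 - α) / (1 + α)) * ((1 / α) * α ^ ((r : ℤ) - k').natAbs) :=
            mul_le_mul_of_nonneg_left h hc
        _ = (1 / α) * (((1 - α) / (1 + α)) * α ^ ((r : ℤ) - k').natAbs) := by ring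
end

section
/- For every n ≥ 1, the ratio of the probability of observing ⊥ⁿ⊤ on database d (with threshold t = 2) to that on neighbor d′ exceeds (16/11)·2ⁿ: specifically, [(3/20)·(1/3)ⁿ·(5/6) + (4/5)·(2/3)ⁿ·(2/3)] / [(3/20)·(1/6)ⁿ·(2/3) + (4/5)·(1/3)ⁿ·(1/3)] > (16/11)·2ⁿ. -/
theorem above_threshold_ratio_bound (n : ℕ) (hn : 1 ≤ n) :
    ((3/20) * (1/3 : ℝ)^n * (5/6) + (4/5) * (2/3 : ℝ)^n * (2/3)) /
      ((3/20) * (1/6 : ℝ)^n * (2/3) + (4/5) * (1/3 : ℝ)^n * (1/3)) >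
      (16/11) * 2^n := by
  have h1 : (2:ℝ)^n * (1/6)^n = (1/3)^n := by rw [← mul_pow]; norm_num
  have h2 : (2:ℝ)^n * (1/3)^n = (2/3)^n := by rw [← mul_pow]; norm_num
  have h3 : (1/3:ℝ)^n ≤ (2/3)^n := pow_le_pow_left₀ (by norm_num) (by norm_num) n
  have ha : (0:ℝ) < (1/3)^n := by positivity
  have hc : (0:ℝ) < (1/6)^n := by positivity
  have hD : (0:ℝ) < (3/20) * (1/6 : ℝ)^n * (2/3) + (4/5) * (1/3 : ℝ)^n * (1/3) := by positivity
  rw [gt_iff_lt, lt_div_iff₀ hD]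
  nlinarith [h1, h2, h3, ha, hc]
end

section
/- The discretized Above Threshold mechanism is not ε-differentially private for any ε: for every ε > 0 there exists n ≥ 1 such that (3/20)·(1/3)ⁿ·(5/6) + (4/5)·(2/3)ⁿ·(2/3) > e^ε · [(3/20)·(1/6)ⁿ·(2/3) + (4/5)·(1/3)ⁿ·(1/3)]. -/
theorem above_threshold_not_dp (ε : ℝ) (hε : 0 < ε) :
    ∃ n : ℕ, 1 ≤ n ∧
      (3/20) * (1/3 : ℝ)^n * (5/6) + (4/5) * (2/3 : ℝ)^n * (2/3) >
        Real.exp ε * ((3/20) * (1/6 : ℝ)^n * (2/3) + (4/5) * (1/3 : ℝ)^n * (1/3)) := by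
  set k := ⌈ε⌉₊ with hkdef
  have hk1 : 1 ≤ k := Nat.ceil_pos.mpr hε
  refine ⟨2 * k, by omega, ?_⟩
  set n := 2 * k with hndef
  have hE : Real.exp ε < (4 : ℝ) ^ k := by
    calc Real.exp ε ≤ Real.exp k := Real.exp_le_exp.mpr (Nat.le_ceil ε)
      _ = Real.exp 1 ^ k := by
          rw [← Real.exp_nat_mul]; norm_num
      _ < 3 ^ k := by
          apply pow_lt_pow_left₀ _ (Real.exp_pos 1).le (by omega)
          exact Real.exp_one_lt_d9.trans_le (by norm_num)
      _ ≤ 4 ^ k := pow_le_pow_left₀ (by norm_num) (by norm_num) k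
  have h4 : (4 : ℝ) ^ k = 2 ^ n := by
    rw [hndef, pow_mul]; norm_num
  have hp : (0 : ℝ) < (1/3 : ℝ) ^ n := by positivity
  have h16 : (1/6 : ℝ) ^ n ≤ (1/3 : ℝ) ^ n :=
    pow_le_pow_left₀ (by norm_num) (by norm_num) n
  have h23 : (2/3 : ℝ) ^ n = 2 ^ n * (1/3 : ℝ) ^ n := by
    rw [← mul_pow]; norm_num
  have h1 : Real.exp ε * (1/3 : ℝ) ^ n < 2 ^ n * (1/3 : ℝ) ^ n := by
    exact mul_lt_mul_of_pos_right (h4 ▸ hE) hp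
  have h2 : Real.exp ε * (1/6 : ℝ) ^ n ≤ Real.exp ε * (1/3 : ℝ) ^ n :=
    mul_le_mul_of_nonneg_left h16 (Real.exp_pos ε).le
  have hpos : (0 : ℝ) < 2 ^ n * (1/3 : ℝ) ^ n := by positivity
  rw [h23]
  nlinarith [hp, h1, h2, hpos]
end

section
/- The ratio Pr_d(n)/Pr_{d′}(n) for the discretized Above Threshold mechanism tends to infinity as n → ∞, where Pr_d(n) = (3/20)·(1/3)ⁿ·(5/6) + (4/5)·(2/3)ⁿ·(2/3) and Pr_{d′}(n) = (3/20)·(1/6)ⁿ·(2/3) + (4/5)·(1/3)ⁿ·(1/3). -/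
theorem above_threshold_ratio_tendsto_atTop :
    Filter.Tendsto
      (fun n : ℕ =>
        ((3/20) * (1/3 : ℝ)^n * (5/6) + (4/5) * (2/3 : ℝ)^n * (2/3)) /
          ((3/20) * (1/6 : ℝ)^n * (2/3) + (4/5) * (1/3 : ℝ)^n * (1/3)))
      Filter.atTop Filter.atTop := by
  have hbig : Filter.Tendsto (fun n : ℕ => (16/11 : ℝ) * 2^n) Filter.atTop Filter.atTop :=
    (tendsto_pow_atTop_atTop_of_one_lt (by norm_num : (1:ℝ) < 2)).const_mul_atTop (by norm_num)
  refine Filter.tendsto_atTop_mono (fun n => ?_) hbig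
  have h3pos : (0:ℝ) < (1/3:ℝ)^n := by positivity
  have h16 : ((1/6:ℝ))^n ≤ (1/3:ℝ)^n := pow_le_pow_left₀ (by norm_num) (by norm_num) n
  have key : (16/11 : ℝ) * 2^n =
      ((8/15:ℝ) * (2/3)^n) / ((11/30:ℝ) * (1/3)^n) := by
    rw [show (2/3:ℝ) = 2 * (1/3) by norm_num, mul_pow]
    have h3 : ((1/3:ℝ))^n ≠ 0 := ne_of_gt h3pos
    field_simp
    ring
  rw [key]
  apply div_le_div₀ (by positivity)
  · calc (8/15:ℝ) * (2/3)^n ≤ 0 + (4/5) * (2/3 : ℝ)^n * (2/3) := by ring_nf; nlinarith [h3pos]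
      _ ≤ (3/20) * (1/3 : ℝ)^n * (5/6) + (4/5) * (2/3 : ℝ)^n * (2/3) := by nlinarith [h3pos]
  · positivity
  · calc (3/20) * (1/6 : ℝ)^n * (2/3) + (4/5) * (1/3 : ℝ)^n * (1/3)
        ≤ (3/20) * (1/3 : ℝ)^n * (2/3) + (4/5) * (1/3 : ℝ)^n * (1/3) := by nlinarith [h16]
      _ ≤ (11/30:ℝ) * (1/3)^n := by nlinarith [h3pos]
end
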